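/- arXiv:0908.1197 — 8 statements merged into one kernel-verified Lean document; each statement's English description precedes it below -/
import Mathlib

section
/- Let G be a connected R-graph with n vertices and edge weight matrix P (the weighted Laplacian), and let P_k be the (n-1)×(n-1) matrix obtained by deleting the k-th row and column of P. If x is a vector in R^{n-1} with P_k x ≥ 0 (componentwise), then x ≥ 0 (componentwise). -/
/-- For a connected edge-weighted graph with Laplacian `P`, if `P_k x ≥ 0`
componentwise (where `P_k` deletes the `k`-th row and column), then `x ≥ 0`. -/
theorem stmt_0 {n : ℕ} (p : Fin n → Fin n → ℝ)
    (hsym : ∀ i j, p i j = p j i) (hnn : ∀ i j, 0 ≤ p i j)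
    (hloop : ∀ i, p i i = 0)
    (hconn : ∀ i j : Fin n, Relation.ReflTransGen (fun a b => 0 < p a b) i j)
    (k : Fin n)
    (P : Matrix (Fin n) (Fin n) ℝ)
    (hP : ∀ i j, P i j = if i = j then ∑ l ∈ Finset.univ.erase i, p i l else -(p i j))
    (Pk : Matrix {i : Fin n // i ≠ k} {i : Fin n // i ≠ k} ℝ)
    (hPk : ∀ i j, Pk i j = P i.1 j.1)
    (x : {i : Fin n // i ≠ k} → ℝ)
    (hx : ∀ i, 0 ≤ Pk.mulVec x i) :
    ∀ i, 0 ≤ x i := by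
  classical
  set y : Fin n → ℝ := fun j => if h : j = k then 0 else x ⟨j, h⟩ with hy
  have hyk : y k = 0 := by simp [hy]
  have hyx : ∀ i : {i : Fin n // i ≠ k}, y i.1 = x i := by
    rintro ⟨i, hi⟩; simp [hy, hi]
  obtain ⟨m, -, hmin⟩ := Finset.exists_min_image (Finset.univ : Finset (Fin n)) y
    ⟨k, Finset.mem_univ k⟩
  have hmin' : ∀ l, y m ≤ y l := fun l => hmin l (Finset.mem_univ l)
  -- main claim: the minimum is nonnegative
  have hm : 0 ≤ y m := by
    by_contra hm
    push_neg at hm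
    -- the set of minimizers is closed under positive-weight edges
    have key : ∀ j : Fin n, y j = y m → ∀ l, 0 < p j l → y l = y m := by
      intro j hj l hl
      have hjk : j ≠ k := by
        intro h; rw [h, hyk] at hj; linarith
      have h0 := hx ⟨j, hjk⟩
      have hsum : Pk.mulVec x ⟨j, hjk⟩
          = ∑ i ∈ Finset.univ.erase j, p j i * (y j - y i) := by
        have e1 : Pk.mulVec x ⟨j, hjk⟩ = ∑ i : {i : Fin n // i ≠ k}, P j i.1 * y i.1 := by
          unfold Matrix.mulVec dotProduct
          refine Finset.sum_congr rfl fun i _ => ?_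
          show Pk ⟨j, hjk⟩ i * x i = _
          rw [hPk, hyx]
        have e2 : (∑ i : {i : Fin n // i ≠ k}, P j i.1 * y i.1)
            = ∑ i ∈ Finset.univ.erase k, P j i * y i := by
          rw [← Finset.sum_subtype (Finset.univ.erase k)
            (fun i => by simp [Finset.mem_erase]) (fun i => P j i * y i)]
        have e3 : (∑ i ∈ Finset.univ.erase k, P j i * y i)
            = ∑ i : Fin n, P j i * y i := by
          rw [← Finset.sum_erase_add _ _ (Finset.mem_univ k), hyk]
          ring
        have e4 : (∑ i : Fin n, P j i * y i)
            = P j j * y j + ∑ i ∈ Finset.univ.erase j, P j i * y i :=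
          (Finset.sum_erase_add _ _ (Finset.mem_univ j)).symm.trans (by ring)
        rw [e1, e2, e3, e4, hP j j, if_pos rfl, Finset.sum_mul, ← Finset.sum_add_distrib]
        refine Finset.sum_congr rfl fun i hi => ?_
        rw [hP j i, if_neg (by simp [Finset.mem_erase] at hi; exact fun h => hi (h ▸ rfl))]
        ring
      rw [hsum] at h0
      have hnonpos : ∀ i ∈ Finset.univ.erase j, p j i * (y j - y i) ≤ 0 := by
        intro i _
        have := hmin' i
        rw [hj] at *
        nlinarith [hnn j i]
      have hzero : ∀ i ∈ Finset.univ.erase j, p j i * (y j - y i) = 0 := by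
        have := Finset.sum_eq_zero_iff_of_nonpos hnonpos
        have hle : (∑ i ∈ Finset.univ.erase j, p j i * (y j - y i)) ≤ 0 :=
          Finset.sum_nonpos hnonpos
        have : (∑ i ∈ Finset.univ.erase j, p j i * (y j - y i)) = 0 := le_antisymm hle h0
        exact (Finset.sum_eq_zero_iff_of_nonpos hnonpos).mp this
      have hlj : l ≠ j := by
        intro h; rw [h, hloop] at hl; exact lt_irrefl _ hl
      have := hzero l (Finset.mem_erase.mpr ⟨hlj, Finset.mem_univ l⟩)
      have : y j - y l = 0 := by
        rcases mul_eq_zero.mp this with h | h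
        · exact absurd h (ne_of_gt hl)
        · exact h
      linarith [hj, this]
    have prop : ∀ b, Relation.ReflTransGen (fun a b => 0 < p a b) m b → y b = y m := by
      intro b h
      induction h with
      | refl => rfl
      | tail _ step ih => exact key _ ih _ step
    have := prop k (hconn m k)
    rw [hyk] at this
    linarith
  intro i
  rw [← hyx i]
  exact le_trans hm (hmin' i.1)
end

section
/- Let G be a connected R-graph with n ≥ 2 vertices and weighted Laplacian P, and let P_k be P with its k-th row and column deleted. Then every entry of the inverse matrix P_k^{-1} is nonnegative. -/
/-!
The reduced Laplacian `P_k` is a Z-matrix (nonpositive off-diagonal entries) whose row sums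
`p i k` are nonnegative. For a Z-matrix `A` with positive row sums, the minimum principle gives
`0 ≤ A *ᵥ x → 0 ≤ x`: at a negative minimum `x i₀` one would have
`(A *ᵥ x) i₀ ≤ (∑ j, A i₀ j) * x i₀ < 0`. Applied to the columns of `A⁻¹`, this makes `A⁻¹`
entrywise nonnegative. Nonnegative row sums are reached by the perturbation `A + ε • 1`,
`ε → 0⁺`, using continuity of the matrix inverse at an invertible matrix.
-/

open Filter Topology

namespace Matrix

variable {ι : Type*} [Fintype ι]

section OrderedField

variable {R : Type*} [Field R] [LinearOrder R] [IsStrictOrderedRing R] {A : Matrix ι ι R}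

theorem nonneg_of_mulVec_nonneg_of_sum_row_pos (hoff : ∀ i j, i ≠ j → A i j ≤ 0)
    (hrow : ∀ i, 0 < ∑ j, A i j) {x : ι → R} (hx : ∀ i, 0 ≤ (A *ᵥ x) i) (i : ι) :
    0 ≤ x i := by
  by_contra! hneg
  have : Nonempty ι := ⟨i⟩
  obtain ⟨i₀, hmin⟩ := Finite.exists_min x
  have hterm : ∀ j, A i₀ j * x j ≤ A i₀ j * x i₀ := fun j => by
    rcases eq_or_ne i₀ j with rfl | hj
    · rfl
    · exact mul_le_mul_of_nonpos_left (hmin j) (hoff i₀ j hj)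
  have : (A *ᵥ x) i₀ < 0 := calc
    (A *ᵥ x) i₀ = ∑ j, A i₀ j * x j := rfl
    _ ≤ ∑ j, A i₀ j * x i₀ := Finset.sum_le_sum fun j _ => hterm j
    _ = (∑ j, A i₀ j) * x i₀ := (Finset.sum_mul ..).symm
    _ < 0 := mul_neg_of_pos_of_neg (hrow i₀) ((hmin i).trans_lt hneg)
  exact (hx i₀).not_gt this

variable [DecidableEq ι]

theorem isUnit_of_sum_row_pos (hoff : ∀ i j, i ≠ j → A i j ≤ 0)
    (hrow : ∀ i, 0 < ∑ j, A i j) : IsUnit A := by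
  refine mulVec_injective_iff_isUnit.1 fun x y hxy => funext fun i => le_antisymm ?_ ?_
  all_goals
    refine sub_nonneg.1 (nonneg_of_mulVec_nonneg_of_sum_row_pos hoff hrow (x := _ - _)
      (fun i => ?_) i)
    simp [mulVec_sub, hxy]

theorem inv_apply_nonneg_of_sum_row_pos (hoff : ∀ i j, i ≠ j → A i j ≤ 0)
    (hrow : ∀ i, 0 < ∑ j, A i j) (i j : ι) : 0 ≤ A⁻¹ i j := by
  have hA : A * A⁻¹ = 1 :=
    mul_nonsing_inv A ((isUnit_iff_isUnit_det A).1 (isUnit_of_sum_row_pos hoff hrow))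
  refine nonneg_of_mulVec_nonneg_of_sum_row_pos hoff hrow (x := fun l => A⁻¹ l j) (fun l => ?_) i
  have : (A *ᵥ fun l => A⁻¹ l j) l = (1 : Matrix ι ι R) l j := by rw [← hA]; rfl
  rw [this, one_apply]
  split_ifs <;> norm_num

end OrderedField

variable [DecidableEq ι]

theorem inv_apply_nonneg_of_sum_row_nonneg {A : Matrix ι ι ℝ}
    (hoff : ∀ i j, i ≠ j → A i j ≤ 0) (hrow : ∀ i, 0 ≤ ∑ j, A i j) (i j : ι) :
    0 ≤ A⁻¹ i j := by
  by_cases hdet : IsUnit A.det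
  swap
  · simp [nonsing_inv_apply_not_isUnit A hdet]
  have hshift : Tendsto (fun ε : ℝ => A + ε • 1) (𝓝[>] 0) (𝓝 A) := by
    have : Continuous fun ε : ℝ => A + ε • (1 : Matrix ι ι ℝ) := by fun_prop
    simpa using this.tendsto' 0 A (by simp) |>.mono_left nhdsWithin_le_nhds
  have hinv : ContinuousAt Inv.inv A :=
    continuousAt_matrix_inv A (Ring.inverse_eq_inv' (G₀ := ℝ) ▸ continuousAt_inv₀ hdet.ne_zero)
  refine ge_of_tendsto (((hinv.tendsto.comp hshift).apply_nhds i).apply_nhds j) ?_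
  filter_upwards [self_mem_nhdsWithin] with ε (hε : 0 < ε)
  refine inv_apply_nonneg_of_sum_row_pos (fun i j hij => ?_) (fun i => ?_) i j
  · simpa [one_apply_ne hij] using hoff i j hij
  · simpa [Finset.sum_add_distrib, one_apply] using add_pos_of_nonneg_of_pos (hrow i) hε

end Matrix

section Laplacian

variable {ι : Type*} [Fintype ι] [DecidableEq ι] {p : ι → ι → ℝ} {P : Matrix ι ι ℝ}

theorem laplacian_sum_row_eq_zero
    (hP : ∀ i j, P i j = if i = j then ∑ l ∈ Finset.univ.erase i, p i l else -(p i j))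
    (i : ι) : ∑ j, P i j = 0 := by
  rw [← Finset.add_sum_erase _ _ (Finset.mem_univ i), hP, if_pos rfl, ← sub_neg_eq_add,
    ← Finset.sum_neg_distrib, sub_eq_zero]
  exact Finset.sum_congr rfl fun j hj => by
    rw [hP, if_neg (Finset.ne_of_mem_erase hj).symm, neg_neg]

theorem laplacian_sum_row_erase
    (hP : ∀ i j, P i j = if i = j then ∑ l ∈ Finset.univ.erase i, p i l else -(p i j))
    {i k : ι} (hik : i ≠ k) : ∑ j ∈ Finset.univ.erase k, P i j = p i k := by
  rw [Finset.sum_erase_eq_sub (Finset.mem_univ k), laplacian_sum_row_eq_zero hP, hP,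
    if_neg hik, zero_sub, neg_neg]

end Laplacian

theorem stmt_2_general {n : ℕ} (p : Fin n → Fin n → ℝ)
    (hnn : ∀ i j, 0 ≤ p i j)
    (k : Fin n)
    (P : Matrix (Fin n) (Fin n) ℝ)
    (hP : ∀ i j, P i j = if i = j then ∑ l ∈ Finset.univ.erase i, p i l else -(p i j))
    (Pk : Matrix {i : Fin n // i ≠ k} {i : Fin n // i ≠ k} ℝ)
    (hPk : ∀ i j, Pk i j = P i.1 j.1) :
    ∀ i j, 0 ≤ Pk⁻¹ i j := by
  refine Matrix.inv_apply_nonneg_of_sum_row_nonneg (fun i j hij => ?_) (fun i => ?_)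
  · rw [hPk, hP, if_neg (Subtype.coe_ne_coe.2 hij)]
    exact neg_nonpos.2 (hnn _ _)
  · simp_rw [hPk]
    rw [← Finset.sum_subtype _
      (fun _ => Finset.mem_erase.trans (and_iff_left (Finset.mem_univ _))) (P i.1),
      laplacian_sum_row_erase hP i.2]
    exact hnn _ _

/-- For a connected edge-weighted graph on `n ≥ 2` vertices with Laplacian `P`,
every entry of the inverse of the reduced matrix `P_k` is nonnegative. -/
theorem stmt_2 {n : ℕ} (hn : 2 ≤ n) (p : Fin n → Fin n → ℝ)
    (hsym : ∀ i j, p i j = p j i) (hnn : ∀ i j, 0 ≤ p i j)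
    (hloop : ∀ i, p i i = 0)
    (hconn : ∀ i j : Fin n, Relation.ReflTransGen (fun a b => 0 < p a b) i j)
    (k : Fin n)
    (P : Matrix (Fin n) (Fin n) ℝ)
    (hP : ∀ i j, P i j = if i = j then ∑ l ∈ Finset.univ.erase i, p i l else -(p i j))
    (Pk : Matrix {i : Fin n // i ≠ k} {i : Fin n // i ≠ k} ℝ)
    (hPk : ∀ i j, Pk i j = P i.1 j.1) :
    ∀ i j, 0 ≤ Pk⁻¹ i j :=
  stmt_2_general p hnn k P hP Pk hPk
end

section
/- Let G be an R-graph, D a divisor on G, and a > 0. Then the linear system |D| on G is nonempty if and only if the linear system |T_a(D)| on aG is nonempty. -/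
/-- The homothety `T_a(D) = aD + (a-1)·I` on divisors, `I` the all-ones divisor. -/
def Ta {n : ℕ} (a : ℝ) (D : Fin n → ℝ) : Fin n → ℝ := fun i => a * D i + (a - 1)

/-- The weighted Laplacian of the weighted graph `p`. -/
def lap {n : ℕ} (p : Fin n → Fin n → ℝ) : Fin n → Fin n → ℝ :=
  fun i j => if i = j then ∑ l ∈ Finset.univ.erase i, p i l else -(p i j)

/-- Nonemptiness of the linear system `|D|`: some divisor linearly equivalent to `D`
(i.e. differing by an integer combination of Laplacian columns) has all coordinates `> -1`. -/
def LSNonempty {n : ℕ} (p : Fin n → Fin n → ℝ) (D : Fin n → ℝ) : Prop :=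
  ∃ m : Fin n → ℤ, ∀ i, D i + ∑ j, (m j : ℝ) * lap p i j > -1

/-- `|D| ≠ ∅` on `G` iff `|T_a(D)| ≠ ∅` on `aG`. -/
theorem stmt_10 {n : ℕ} (p : Fin n → Fin n → ℝ)
    (hsym : ∀ i j, p i j = p j i) (hnn : ∀ i j, 0 ≤ p i j) (hloop : ∀ i, p i i = 0)
    (D : Fin n → ℝ) (a : ℝ) (ha : 0 < a) :
    LSNonempty p D ↔ LSNonempty (fun i j => a * p i j) (Ta a D) := by
  have hlap : ∀ i j, lap (fun i j => a * p i j) i j = a * lap p i j := by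
    intro i j
    simp only [lap]
    split <;> simp [Finset.mul_sum, mul_sub]
  have key : ∀ m : Fin n → ℤ, ∀ i,
      Ta a D i + ∑ j, (m j : ℝ) * lap (fun i j => a * p i j) i j
      = a * (D i + ∑ j, (m j : ℝ) * lap p i j) + (a - 1) := by
    intro m i
    have h : ∀ j, (m j : ℝ) * (a * lap p i j) = a * ((m j : ℝ) * lap p i j) :=
      fun j => by ring
    simp only [hlap, Ta, h, ← Finset.mul_sum]
    ring
  constructor <;> rintro ⟨m, hm⟩ <;> refine ⟨m, fun i => ?_⟩
  · rw [key]
    have := hm i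
    nlinarith
  · have := hm i
    rw [key] at this
    nlinarith
end

section
/- Let G be an R-graph, D and E divisors on G, and a > 0. Then |D - E| is nonempty on G if and only if |T_a(D) - aE| is nonempty on aG. -/
lemma lap_smul {n : ℕ} (a : ℝ) (p : Fin n → Fin n → ℝ) (i j : Fin n) :
    lap (fun i j => a * p i j) i j = a * lap p i j := by
  unfold lap
  split <;> simp [Finset.mul_sum, mul_sub]

/-- `|D - E| ≠ ∅` on `G` iff `|T_a(D) - aE| ≠ ∅` on `aG`. -/
theorem stmt_11 {n : ℕ} (p : Fin n → Fin n → ℝ)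
    (hsym : ∀ i j, p i j = p j i) (hnn : ∀ i j, 0 ≤ p i j) (hloop : ∀ i, p i i = 0)
    (D E : Fin n → ℝ) (a : ℝ) (ha : 0 < a) :
    LSNonempty p (D - E) ↔ LSNonempty (fun i j => a * p i j) (Ta a D - a • E) := by
  have key : ∀ (m : Fin n → ℤ) (i : Fin n),
      ((D - E) i + ∑ j, (m j : ℝ) * lap p i j > -1) ↔
      ((Ta a D - a • E) i + ∑ j, (m j : ℝ) * lap (fun i j => a * p i j) i j > -1) := by
    intro m i
    simp only [lap_smul, Ta, Pi.sub_apply, Pi.smul_apply, smul_eq_mul]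
    have hsum : ∑ j, (m j : ℝ) * (a * lap p i j) = a * ∑ j, (m j : ℝ) * lap p i j := by
      rw [Finset.mul_sum]; congr 1; ext j; ring
    rw [hsum]
    constructor <;> intro h <;> nlinarith
  constructor <;> rintro ⟨m, hm⟩ <;> exact ⟨m, fun i => by
    first | exact (key m i).mp (hm i) | exact (key m i).mpr (hm i)⟩
end

section
/- Let G be the two-vertex R-graph with edge weight p > 0 and let D = (a,b). If ⌊(a+1)/p⌋ + ⌊(b+1)/p⌋ < 0, then h^0((a,b)) = 0; if ⌊(a+1)/p⌋ + ⌊(b+1)/p⌋ > 0, then h^0((a,b)) = a + b - p + 2. -/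
/-- Nonemptiness of the linear system `|(a,b)|` on the two-vertex graph with edge weight `p`. -/
def LSNonempty2 (p a b : ℝ) : Prop :=
  ∃ m : ℤ, a + m * p > -1 ∧ b - m * p > -1

/-- `h⁰((a,b))` on the two-vertex graph with edge weight `p`. -/
noncomputable def h02 (p a b : ℝ) : ℝ :=
  sInf {d : ℝ | ∃ e f : ℝ, 0 ≤ e ∧ 0 ≤ f ∧ ¬ LSNonempty2 p (a - e) (b - f) ∧ d = e + f}

lemma not_ls_aux (p a b : ℝ) (hp : 0 < p) (h : ⌊(a + 1) / p⌋ + ⌊(b + 1) / p⌋ < 0) :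
    ¬ LSNonempty2 p a b := by
  rintro ⟨m, h1, h2⟩
  have hma : (-m : ℤ) ≤ ⌊(a + 1) / p⌋ := by
    rw [Int.le_floor]
    rw [le_div_iff₀ hp]
    push_cast
    nlinarith
  have hmb : (m : ℤ) ≤ ⌊(b + 1) / p⌋ := by
    rw [Int.le_floor]
    rw [le_div_iff₀ hp]
    push_cast
    nlinarith
  omega

lemma ls_aux (p a b : ℝ) (hp : 0 < p) (h : p < a + b + 2) : LSNonempty2 p a b := by
  refine ⟨⌊-(a + 1) / p⌋ + 1, ?_, ?_⟩
  · have h1 : (-(a + 1) / p : ℝ) < (⌊-(a + 1) / p⌋ : ℝ) + 1 := Int.lt_floor_add_one _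
    have h2 := (div_lt_iff₀ hp).mp h1
    push_cast
    nlinarith
  · have h1 : ((⌊-(a + 1) / p⌋ : ℝ)) ≤ -(a + 1) / p := Int.floor_le _
    have h2 := mul_le_mul_of_nonneg_right h1 hp.le
    rw [div_mul_cancel₀ _ hp.ne'] at h2
    push_cast
    nlinarith

/-- if `⌊(a+1)/p⌋ + ⌊(b+1)/p⌋ < 0` then `h⁰((a,b)) = 0`; if
`⌊(a+1)/p⌋ + ⌊(b+1)/p⌋ > 0` then `h⁰((a,b)) = a + b - p + 2`. -/
theorem stmt_15 (p a b : ℝ) (hp : 0 < p) :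
    (⌊(a + 1) / p⌋ + ⌊(b + 1) / p⌋ < 0 → h02 p a b = 0) ∧
    (0 < ⌊(a + 1) / p⌋ + ⌊(b + 1) / p⌋ → h02 p a b = a + b - p + 2) := by
  constructor
  · intro h
    have hmem : (0 : ℝ) ∈ {d : ℝ | ∃ e f : ℝ, 0 ≤ e ∧ 0 ≤ f ∧
        ¬ LSNonempty2 p (a - e) (b - f) ∧ d = e + f} := by
      refine ⟨0, 0, le_refl _, le_refl _, ?_, by ring⟩
      simpa using not_ls_aux p a b hp h
    unfold h02
    apply le_antisymm
    · exact csInf_le ⟨0, fun d ⟨e, f, he, hf, _, hd⟩ => by linarith⟩ hmem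
    · exact le_csInf ⟨0, hmem⟩ (fun d ⟨e, f, he, hf, _, hd⟩ => by linarith)
  · intro h
    set k := ⌊(b + 1) / p⌋ with hk
    have hkb : (k : ℝ) * p ≤ b + 1 := by
      have := Int.floor_le ((b + 1) / p)
      calc (k : ℝ) * p ≤ ((b + 1) / p) * p := by nlinarith
        _ = b + 1 := div_mul_cancel₀ _ hp.ne'
    have hka : (1 - (k : ℝ)) * p ≤ a + 1 := by
      have h1 : (1 - k : ℤ) ≤ ⌊(a + 1) / p⌋ := by omega
      have h2 : ((1 - k : ℤ) : ℝ) ≤ (a + 1) / p :=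
        le_trans (by exact_mod_cast h1) (Int.floor_le _)
      calc (1 - (k : ℝ)) * p = ((1 - k : ℤ) : ℝ) * p := by push_cast; ring
        _ ≤ ((a + 1) / p) * p := by nlinarith
        _ = a + 1 := div_mul_cancel₀ _ hp.ne'
    have hmem : (a + b - p + 2 : ℝ) ∈ {d : ℝ | ∃ e f : ℝ, 0 ≤ e ∧ 0 ≤ f ∧
        ¬ LSNonempty2 p (a - e) (b - f) ∧ d = e + f} := by
      refine ⟨a + 1 - (1 - (k : ℝ)) * p, b + 1 - (k : ℝ) * p, by linarith, by linarith, ?_, by ring⟩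
      rintro ⟨m, h1, h2⟩
      have ha' : a - (a + 1 - (1 - (k : ℝ)) * p) = (1 - (k : ℝ)) * p - 1 := by ring
      rw [ha'] at h1
      have hb' : b - (b + 1 - (k : ℝ) * p) = (k : ℝ) * p - 1 := by ring
      rw [hb'] at h2
      -- h1 : (1 - k) * p - 1 + m * p > -1  ⇒ (m + 1 - k) * p > 0 ⇒ m > k - 1
      have hm1 : ((k : ℝ) - 1) < m := by nlinarith
      have hm2 : (m : ℝ) < k := by nlinarith
      have hm1' : k - 1 < m := by exact_mod_cast hm1
      have hm2' : m < k := by exact_mod_cast hm2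
      omega
    have hlb : ∀ d ∈ {d : ℝ | ∃ e f : ℝ, 0 ≤ e ∧ 0 ≤ f ∧
        ¬ LSNonempty2 p (a - e) (b - f) ∧ d = e + f}, a + b - p + 2 ≤ d := by
      rintro d ⟨e, f, he, hf, hnot, hd⟩
      by_contra hc
      push_neg at hc
      exact hnot (ls_aux p (a - e) (b - f) hp (by linarith))
    unfold h02
    exact le_antisymm (csInf_le ⟨_, hlb⟩ hmem) (le_csInf ⟨_, hmem⟩ hlb)
end

section
/- Let G be the two-vertex R-graph with edge weight p > 0 and D = (a,b) with ⌊(a+1)/p⌋ + ⌊(b+1)/p⌋ = 0. Then h^0((a,b)) = min{a+1-p⌊(a+1)/p⌋, b+1-p⌊(b+1)/p⌋}. -/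
/-- if `⌊(a+1)/p⌋ + ⌊(b+1)/p⌋ = 0` then
`h⁰((a,b)) = min(a+1-p⌊(a+1)/p⌋, b+1-p⌊(b+1)/p⌋)`. -/
theorem stmt_16 (p a b : ℝ) (hp : 0 < p)
    (h : ⌊(a + 1) / p⌋ + ⌊(b + 1) / p⌋ = 0) :
    h02 p a b = min (a + 1 - p * ⌊(a + 1) / p⌋) (b + 1 - p * ⌊(b + 1) / p⌋) := by
  set m := ⌊(a + 1) / p⌋ with hm
  have hbm : ⌊(b + 1) / p⌋ = -m := by omega
  set r := a + 1 - p * m with hrdef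
  set s := b + 1 + p * m with hsdef
  have hgoal : min (a + 1 - p * ⌊(a + 1) / p⌋) (b + 1 - p * ⌊(b + 1) / p⌋) = min r s := by
    rw [hbm]
    congr 1
    push_cast
    show b + 1 - p * (-(m:ℝ)) = b + 1 + p * m
    ring
  rw [hgoal]
  have hr0 : 0 ≤ r := by
    have := Int.floor_le ((a + 1) / p)
    rw [← hm] at this
    have := (le_div_iff₀ hp).mp this
    simp only [hrdef]; nlinarith
  have hr1 : r < p := by
    have := Int.lt_floor_add_one ((a + 1) / p)
    rw [← hm] at this
    have := (div_lt_iff₀ hp).mp this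
    simp only [hrdef]; nlinarith
  have hs0 : 0 ≤ s := by
    have := Int.floor_le ((b + 1) / p)
    rw [hbm] at this
    have := (le_div_iff₀ hp).mp this
    push_cast at this
    simp only [hsdef]; nlinarith
  have hs1 : s < p := by
    have := Int.lt_floor_add_one ((b + 1) / p)
    rw [hbm] at this
    have := (div_lt_iff₀ hp).mp this
    push_cast at this
    simp only [hsdef]; nlinarith
  have key : ∀ k : ℤ, (0 : ℝ) < p * k → p ≤ p * k := by
    intro k hk
    have h1 : (0 : ℝ) < (k : ℝ) := by
      rcases mul_pos_iff.mp hk with ⟨_, h⟩ | ⟨h, _⟩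
      · exact h
      · linarith
    have h2 : (1 : ℤ) ≤ k := by exact_mod_cast h1
    have h3 : (1 : ℝ) ≤ (k : ℝ) := by exact_mod_cast h2
    nlinarith
  apply IsLeast.csInf_eq
  constructor
  · -- membership
    rcases le_total r s with hrs | hrs
    · rw [min_eq_left hrs]
      refine ⟨r, 0, hr0, le_refl 0, ?_, by ring⟩
      rintro ⟨n, h1, h2⟩
      have hA : (0 : ℝ) < p * ((n + m : ℤ) : ℝ) := by push_cast; simp only [hrdef] at h1; linarith
      have := key _ hA
      push_cast at this h2
      nlinarith
    · rw [min_eq_right hrs]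
      refine ⟨0, s, le_refl 0, hs0, ?_, by ring⟩
      rintro ⟨n, h1, h2⟩
      have hA : (0 : ℝ) < p * ((-n - m : ℤ) : ℝ) := by push_cast; simp only [hsdef] at h2; linarith
      have := key _ hA
      push_cast at this h1
      nlinarith
  · -- lower bound
    rintro d ⟨e, f, he, hf, hne, hd⟩
    by_contra hlt
    push_neg at hlt
    have hlr : d < r := lt_of_lt_of_le hlt (min_le_left _ _)
    have hls : d < s := lt_of_lt_of_le hlt (min_le_right _ _)
    exact hne ⟨-m, by push_cast; constructor <;> [skip; skip] <;> nlinarith⟩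
end

section
/- Riemann-Roch for the two-vertex weighted graph: let p > 0, K = (p-2, p-2), g = p-1, and D = (a,b) any divisor. Then h^0(D) - h^0(K - D) = a + b + 1 - g. -/
/-!
Removing `E = (e, f) ≥ 0` from `D = (a, b)` empties the linear system exactly when, for some
cut `n ∈ ℤ`, the shifts `m ≤ n` fail at the first vertex and the shifts `m ≥ n + 1` fail at the
second. The cheapest such `E` for a given cut costs `cutCost p a b n`, so `h⁰(D)` is the infimum
of these costs over `n`. Since `max 0 x = max 0 (-x) + x`, the cut `n` for `D` and the cut
`-n - 1` for `K - D` have costs differing by exactly `deg D + 1 - g`, and Riemann–Roch follows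
by reindexing the infimum.
-/

noncomputable def cutCost (p a b : ℝ) (n : ℤ) : ℝ :=
  max 0 (a + 1 + n * p) + max 0 (b + 1 - (n + 1) * p)

lemma cutCost_nonneg (p a b : ℝ) (n : ℤ) : 0 ≤ cutCost p a b n :=
  add_nonneg (le_max_left _ _) (le_max_left _ _)

lemma bddBelow_range_cutCost (p a b : ℝ) : BddBelow (Set.range (cutCost p a b)) :=
  ⟨0, by rintro _ ⟨n, rfl⟩; exact cutCost_nonneg p a b n⟩

lemma not_lsNonempty2_iff {p : ℝ} (hp : 0 < p) (a b : ℝ) :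
    ¬ LSNonempty2 p a b ↔ ∃ n : ℤ, a + 1 + n * p ≤ 0 ∧ b + 1 - (n + 1) * p ≤ 0 := by
  constructor
  · intro hempty
    -- The last shift that is still effective at the second vertex.
    set n : ℤ := ⌈(b + 1) / p⌉ - 1 with hn
    have hn_lt : (n : ℝ) * p < b + 1 := by
      rw [← lt_div_iff₀ hp, hn]
      push_cast
      linarith [Int.ceil_lt_add_one ((b + 1) / p)]
    have hn_succ : b + 1 ≤ ((n : ℝ) + 1) * p := by
      rw [← div_le_iff₀ hp, hn]
      push_cast
      linarith [Int.le_ceil ((b + 1) / p)]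
    refine ⟨n, ?_, by linarith⟩
    by_contra! ha
    exact hempty ⟨n, by linarith, by linarith⟩
  · rintro ⟨n, ha, hb⟩ ⟨m, ham, hbm⟩
    rcases le_or_gt m n with hmn | hmn
    · have : (m : ℝ) * p ≤ n * p := by gcongr
      linarith
    · have : ((n : ℝ) + 1) * p ≤ m * p := by gcongr; exact_mod_cast hmn
      linarith

lemma h02_eq_iInf_cutCost {p : ℝ} (hp : 0 < p) (a b : ℝ) :
    h02 p a b = ⨅ n, cutCost p a b n := by
  have cutCost_mem (n : ℤ) : cutCost p a b n ∈
      {d : ℝ | ∃ e f : ℝ, 0 ≤ e ∧ 0 ≤ f ∧ ¬ LSNonempty2 p (a - e) (b - f) ∧ d = e + f} := by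
    refine ⟨_, _, le_max_left _ _, le_max_left _ _, (not_lsNonempty2_iff hp _ _).mpr ⟨n, ?_, ?_⟩,
      rfl⟩
    · linarith [le_max_right 0 (a + 1 + n * p)]
    · linarith [le_max_right 0 (b + 1 - (n + 1) * p)]
  apply le_antisymm
  · refine le_ciInf fun n => csInf_le ⟨0, ?_⟩ (cutCost_mem n)
    rintro _ ⟨e, f, he, hf, -, rfl⟩
    exact add_nonneg he hf
  · refine le_csInf ⟨_, cutCost_mem 0⟩ ?_
    rintro _ ⟨e, f, he, hf, hempty, rfl⟩
    obtain ⟨n, ha, hb⟩ := (not_lsNonempty2_iff hp _ _).mp hempty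
    exact (ciInf_le (bddBelow_range_cutCost p a b) n).trans
      (add_le_add (max_le he (by linarith)) (max_le hf (by linarith)))

lemma cutCost_eq_cutCost_reflect (p a b : ℝ) (n : ℤ) :
    cutCost p a b n = cutCost p (p - 2 - a) (p - 2 - b) (-n - 1) + (a + b + 2 - p) := by
  have max_zero_eq (x : ℝ) : max 0 x = max 0 (-x) + x := by
    linarith [max_zero_sub_max_neg_zero_eq_self x, max_comm 0 x, max_comm 0 (-x)]
  rw [cutCost, cutCost, max_zero_eq (a + 1 + n * p), max_zero_eq (b + 1 - (n + 1) * p)]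
  push_cast
  ring_nf

/-- Riemann–Roch for the two-vertex graph: with `K = (p-2, p-2)` and
`g = p - 1`, `h⁰(D) - h⁰(K - D) = deg(D) + 1 - g`. -/
theorem stmt_17 (p a b : ℝ) (hp : 0 < p) :
    h02 p a b - h02 p (p - 2 - a) (p - 2 - b) = a + b + 1 - (p - 1) := by
  have reflect_surjective : Function.Surjective fun n : ℤ => -n - 1 :=
    Function.Involutive.surjective fun n => by ring
  have h02_eq_h02_reflect :
      h02 p a b = h02 p (p - 2 - a) (p - 2 - b) + (a + b + 2 - p) := by
    rw [h02_eq_iInf_cutCost hp, h02_eq_iInf_cutCost hp,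
      ciInf_add (bddBelow_range_cutCost _ _ _)]
    simp only [cutCost_eq_cutCost_reflect p a b]
    exact reflect_surjective.iInf_comp fun n => cutCost p (p - 2 - a) (p - 2 - b) n + (a + b + 2 - p)
  linarith
end

section
/- Let G be a connected R-graph (finite connected graph with positive real edge weights p_{ij}) and D a real divisor on G. Then h^0(D) - h^0(K - D) = deg(D) + 1 - g, where K = Σ_i (deg(v_i) - 2)·v_i and g = Σ_{i<j} p_{ij} - n + 1. -/
/-- `h⁰(D)`: the minimum of `deg(E)` over effective divisors `E` with `|D - E| = ∅`. -/
noncomputable def h0 {n : ℕ} (p : Fin n → Fin n → ℝ) (D : Fin n → ℝ) : ℝ :=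
  sInf {d : ℝ | ∃ E : Fin n → ℝ, (∀ i, 0 ≤ E i) ∧ ¬ LSNonempty p (D - E) ∧ d = ∑ i, E i}

/-- The canonical divisor `K = Σ (deg(v_i) - 2)·v_i`. -/
def canon {n : ℕ} (p : Fin n → Fin n → ℝ) : Fin n → ℝ :=
  fun i => (∑ j ∈ Finset.univ.erase i, p i j) - 2

/-- The genus `g = Σ_{i<j} p_{ij} - n + 1`. -/
def genus {n : ℕ} (p : Fin n → Fin n → ℝ) : ℝ :=
  (∑ ij ∈ Finset.univ.filter (fun ij : Fin n × Fin n => ij.1 < ij.2), p ij.1 ij.2) - n + 1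

/-!
Baker–Norine's argument. For any injective ranking `r` of the vertices, the divisor
`ν_r(v) = (weight of the edges from v to lower-ranked vertices) - 1` has degree `g - 1` and empty
linear system, and `K - ν_r` is `ν` of the reversed ranking. If `|D| = ∅`, move `D` within its
class to a `q`-reduced divisor `x` (minimising a potential); then `x q ≤ -1`, and Dhar's burning
algorithm produces a ranking with `x ≤ ν_r`. Hence `E = ν_r - x` shows
`h⁰(K - D) ≤ g - 1 - deg D`. Applying this to `D - E` for every `E` competing in `h⁰(D)` gives
`h⁰(K - D) + deg D + 1 - g ≤ h⁰(D)`, and the same inequality for `K - D` is the reverse one.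
-/

open Finset Function OrderDual Filter Module

namespace RGraph

variable {n : ℕ} (p : Fin n → Fin n → ℝ)

def laplacian : (Fin n → ℝ) →ₗ[ℝ] Fin n → ℝ where
  toFun v i := ∑ j, v j * lap p i j
  map_add' v w := by ext i; simp [add_mul, sum_add_distrib]
  map_smul' c v := by ext i; simp [mul_assoc, mul_sum]

lemma laplacian_apply (v : Fin n → ℝ) (i : Fin n) :
    laplacian p v i = ∑ j, p i j * (v i - v j) := by
  have hoff : ∀ j ∈ univ.erase i, v j * lap p i j = p i j * (v i - v j) - p i j * v i := by
    intro j hj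
    simp only [lap, if_neg (ne_of_mem_erase hj).symm]
    ring
  change ∑ j, v j * lap p i j = _
  rw [← add_sum_erase _ _ (mem_univ i), ← add_sum_erase _ _ (mem_univ i), sum_congr rfl hoff,
    sum_sub_distrib, ← sum_mul]
  simp only [lap, if_true]
  ring

lemma sum_mul_laplacian_comm (hsym : ∀ i j, p i j = p j i) (v w : Fin n → ℝ) :
    ∑ i, v i * laplacian p w i = ∑ i, w i * laplacian p v i := by
  have hlap : ∀ i j, lap p i j = lap p j i := by
    intro i j
    unfold lap
    rcases eq_or_ne i j with rfl | h
    · rfl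
    · rw [if_neg h, if_neg h.symm, hsym]
  simp only [laplacian, LinearMap.coe_mk, AddHom.coe_mk, mul_sum]
  rw [sum_comm]
  exact sum_congr rfl fun i _ => sum_congr rfl fun j _ => by rw [hlap]; ring

lemma sum_laplacian (hsym : ∀ i j, p i j = p j i) (v : Fin n → ℝ) :
    ∑ i, laplacian p v i = 0 := by
  have hconst : ∀ i, laplacian p 1 i = 0 := by simp [laplacian_apply]
  simpa [hconst] using sum_mul_laplacian_comm p hsym 1 v

def principalDivisor : (Fin n → ℤ) →+ Fin n → ℝ :=
  (laplacian p).toAddMonoidHom.comp ((Int.castAddHom ℝ).compLeft (Fin n))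

lemma principalDivisor_apply (m : Fin n → ℤ) :
    principalDivisor p m = laplacian p (fun j => (m j : ℝ)) := rfl

lemma sum_principalDivisor (hsym : ∀ i j, p i j = p j i) (m : Fin n → ℤ) :
    ∑ i, principalDivisor p m i = 0 :=
  sum_laplacian p hsym _

lemma sum_mul_principalDivisor_comm (hsym : ∀ i j, p i j = p j i) (m m' : Fin n → ℤ) :
    ∑ i, m i * principalDivisor p m' i = ∑ i, m' i * principalDivisor p m i :=
  sum_mul_laplacian_comm p hsym _ _

lemma laplacian_nonpos_of_isMin (hnn : ∀ i j, 0 ≤ p i j) {v : Fin n → ℝ} {i : Fin n}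
    (hmin : ∀ j, v i ≤ v j) : laplacian p v i ≤ 0 := by
  rw [laplacian_apply]
  exact sum_nonpos fun j _ => mul_nonpos_of_nonneg_of_nonpos (hnn i j) (sub_nonpos.2 (hmin j))

lemma eq_of_laplacian_eq_zero_of_isMin (hnn : ∀ i j, 0 ≤ p i j) {v : Fin n → ℝ}
    {i j : Fin n}
    (hmin : ∀ k, v i ≤ v k) (hv : laplacian p v i = 0) (hij : 0 < p i j) : v j = v i := by
  rw [laplacian_apply] at hv
  have hterm := (sum_eq_zero_iff_of_nonpos fun k _ =>
    mul_nonpos_of_nonneg_of_nonpos (hnn i k) (sub_nonpos.2 (hmin k))).1 hv j (mem_univ j)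
  linarith [(mul_eq_zero.1 hterm).resolve_left hij.ne']

lemma eq_of_laplacian_eq_zero (hnn : ∀ i j, 0 ≤ p i j)
    (hconn : ∀ i j : Fin n, Relation.ReflTransGen (fun a b => 0 < p a b) i j)
    {v : Fin n → ℝ} (hv : laplacian p v = 0) (i j : Fin n) : v i = v j := by
  obtain ⟨i₀, -, hi₀⟩ := exists_min_image univ v ⟨i, mem_univ i⟩
  have hmin : ∀ k, v k = v i₀ := fun k => by
    induction hconn i₀ k with
    | refl => rfl
    | tail _ hab ih =>
      rw [← ih]
      refine eq_of_laplacian_eq_zero_of_isMin p hnn (fun k => ?_) (congrFun hv _) hab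
      exact ih ▸ hi₀ k (mem_univ k)
  rw [hmin i, hmin j]

lemma exists_laplacian_eq [NeZero n] (hsym : ∀ i j, p i j = p j i) (hnn : ∀ i j, 0 ≤ p i j)
    (hconn : ∀ i j : Fin n, Relation.ReflTransGen (fun a b => 0 < p a b) i j)
    {c : Fin n → ℝ} (hc : ∑ i, c i = 0) : ∃ w, laplacian p w = c := by
  set ℓ : Dual ℝ (Fin n → ℝ) := ∑ i, LinearMap.proj i
  have hℓ : ∀ v, ℓ v = ∑ i, v i := fun v => by simp [ℓ]
  have hℓ0 : ℓ ≠ 0 := fun h => NeZero.ne n (by simpa [hℓ] using LinearMap.congr_fun h 1)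
  have hker : finrank ℝ (LinearMap.ker (laplacian p)) ≤ 1 := by
    have hle : LinearMap.ker (laplacian p) ≤ Submodule.span ℝ {1} := fun v hv =>
      Submodule.mem_span_singleton.2
        ⟨v 0, funext fun i => by simp [eq_of_laplacian_eq_zero p hnn hconn hv 0 i]⟩
    exact (Submodule.finrank_mono hle).trans
      (by simpa using finrank_span_le_card {(1 : Fin n → ℝ)})
  have hrange : LinearMap.range (laplacian p) = LinearMap.ker ℓ := by
    refine Submodule.eq_of_le_of_finrank_le ?_ ?_
    · rintro _ ⟨v, rfl⟩
      simp [hℓ, sum_laplacian p hsym]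
    · have h1 := (laplacian p).finrank_range_add_finrank_ker
      have h2 := Dual.finrank_ker_add_one_of_ne_zero hℓ0
      simp only [finrank_fin_fun] at h1 h2
      omega
  exact LinearMap.mem_range.1 (hrange ▸ LinearMap.mem_ker.2 ((hℓ c).trans hc))

lemma exists_one_le_principalDivisor [NeZero n] (hsym : ∀ i j, p i j = p j i)
    (hnn : ∀ i j, 0 ≤ p i j)
    (hconn : ∀ i j : Fin n, Relation.ReflTransGen (fun a b => 0 < p a b) i j) (q : Fin n) :
    ∃ b : Fin n → ℤ, ∀ i ≠ q, 1 ≤ principalDivisor p b i := by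
  obtain ⟨w, hw⟩ := exists_laplacian_eq p hsym hnn hconn
    (c := fun i => 1 - if i = q then (n : ℝ) else 0) (by simp [sum_sub_distrib])
  obtain ⟨N, hN⟩ := exists_nat_gt (∑ i, ∑ j, |lap p i j| + 2)
  refine ⟨fun j => round (N * w j), fun i hi => ?_⟩
  set e : Fin n → ℝ := fun j => round (N * w j) - N * w j
  have hsplit : (fun j => ((round (N * w j) : ℤ) : ℝ)) = (N : ℝ) • w + e := by
    ext j
    simp only [e, Pi.add_apply, Pi.smul_apply, smul_eq_mul]
    ring
  have herr : |laplacian p e i| ≤ (∑ i, ∑ j, |lap p i j|) / 2 := by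
    calc |laplacian p e i| = |∑ j, e j * lap p i j| := rfl
      _ ≤ ∑ j, |e j * lap p i j| := abs_sum_le_sum_abs _ _
      _ ≤ ∑ j, |lap p i j| / 2 := sum_le_sum fun j _ => by
          rw [abs_mul, abs_sub_comm]
          nlinarith [abs_sub_round (N * w j), abs_nonneg (lap p i j)]
      _ ≤ (∑ i, ∑ j, |lap p i j|) / 2 := by
          rw [← sum_div]
          gcongr ?_ / 2
          exact single_le_sum (f := fun i => ∑ j, |lap p i j|)
            (fun i _ => sum_nonneg fun j _ => abs_nonneg _) (mem_univ i)
  show 1 ≤ laplacian p (fun j => ((round (N * w j) : ℤ) : ℝ)) i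
  rw [hsplit, map_add, map_smul, hw]
  simp only [Pi.add_apply, Pi.smul_apply, if_neg hi, smul_eq_mul]
  linarith [(abs_le.1 herr).1]

lemma lt_of_laplacian_pos (hnn : ∀ i j, 0 ≤ p i j) {v : Fin n → ℝ} {q : Fin n}
    (hv : ∀ i ≠ q, 0 < laplacian p v i) {i : Fin n} (hi : i ≠ q) : v q < v i := by
  have hmin : ∀ k, (∀ j, v k ≤ v j) → k = q := fun k hk =>
    by_contra fun hkq => (hv k hkq).not_ge (laplacian_nonpos_of_isMin p hnn hk)
  obtain ⟨i₀, -, hi₀⟩ := exists_min_image univ v ⟨q, mem_univ q⟩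
  obtain rfl := hmin i₀ fun j => hi₀ j (mem_univ j)
  exact (hi₀ i (mem_univ i)).lt_of_ne fun h => hi (hmin i fun j => h ▸ hi₀ j (mem_univ j))

lemma laplacian_indicator_of_mem {S : Finset (Fin n)} {i : Fin n} (hi : i ∈ S) :
    laplacian p (fun j => if j ∈ S then 1 else 0) i = ∑ j ∈ Sᶜ, p i j := by
  rw [laplacian_apply, ← sum_add_sum_compl S, sum_eq_zero fun j hj => by simp [hi, hj], zero_add]
  exact sum_congr rfl fun j hj => by simp [hi, mem_compl.1 hj]

lemma laplacian_indicator_nonpos_of_notMem (hnn : ∀ i j, 0 ≤ p i j) {S : Finset (Fin n)}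
    {i : Fin n} (hi : i ∉ S) : laplacian p (fun j => if j ∈ S then 1 else 0) i ≤ 0 :=
  laplacian_nonpos_of_isMin p hnn fun j => by split_ifs <;> simp_all

lemma lsNonempty_iff (D : Fin n → ℝ) :
    LSNonempty p D ↔ ∃ m, ∀ i, -1 < D i + principalDivisor p m i := Iff.rfl

lemma lsNonempty_add_principalDivisor_iff (D : Fin n → ℝ) (m : Fin n → ℤ) :
    LSNonempty p (D + principalDivisor p m) ↔ LSNonempty p D := by
  simp only [lsNonempty_iff]
  constructor
  · rintro ⟨m', h⟩
    exact ⟨m + m', fun i => by simpa [map_add, add_assoc] using h i⟩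
  · rintro ⟨m', h⟩
    exact ⟨m' - m, fun i => by simpa [map_sub] using h i⟩

lemma LSNonempty.mono {D D' : Fin n → ℝ} (h : D ≤ D') : LSNonempty p D → LSNonempty p D' :=
  fun ⟨m, hm⟩ => ⟨m, fun i => (hm i).trans_le (by linarith [h i])⟩

lemma not_lsNonempty_of_sum_le [NeZero n] (hsym : ∀ i j, p i j = p j i) {D : Fin n → ℝ}
    (h : ∑ i, D i ≤ -n) : ¬ LSNonempty p D := by
  rw [lsNonempty_iff]
  rintro ⟨m, hm⟩
  have hlt := sum_lt_sum_of_nonempty univ_nonempty fun i (_ : i ∈ univ) => hm i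
  rw [sum_add_distrib, sum_principalDivisor p hsym] at hlt
  simp at hlt
  linarith

lemma principalDivisor_sub_indicator (m : Fin n → ℤ) (S : Finset (Fin n)) :
    principalDivisor p (m - fun j => if j ∈ S then 1 else 0) =
      principalDivisor p m - laplacian p (fun j => if j ∈ S then 1 else 0) := by
  have hcast : (fun j => ((m - fun j => if j ∈ S then 1 else 0 : Fin n → ℤ) j : ℝ)) =
      (fun j => (m j : ℝ)) - fun j => if j ∈ S then 1 else 0 := by
    ext j
    by_cases hj : j ∈ S <;> simp [hj]
  rw [principalDivisor_apply, principalDivisor_apply, hcast, map_sub]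

lemma exists_neg_one_lt_add_principalDivisor {q : Fin n} {b : Fin n → ℤ}
    (hb : ∀ i ≠ q, 0 < principalDivisor p b i) (D : Fin n → ℝ) :
    ∃ m, ∀ i ≠ q, -1 < D i + principalDivisor p m i := by
  have hev : ∀ᶠ M : ℕ in atTop, ∀ i, i ≠ q → -1 - D i < M * principalDivisor p b i :=
    eventually_all.2 fun i => by
      by_cases hi : i = q
      · simp [hi]
      · exact ((tendsto_natCast_atTop_atTop.atTop_mul_const (hb i hi)).eventually_gt_atTop _).mono
          fun M hM _ => hM
  obtain ⟨M, hM⟩ := hev.exists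
  refine ⟨M • b, fun i hi => ?_⟩
  rw [map_nsmul, Pi.smul_apply, nsmul_eq_mul]
  linarith [hM i hi]

lemma bddBelow_sum_mul_principalDivisor (hsym : ∀ i j, p i j = p j i) {q : Fin n}
    {b : Fin n → ℤ} (hb : ∀ i ≠ q, b q ≤ b i) (D : Fin n → ℝ) :
    BddBelow ((fun m => ∑ i, m i * principalDivisor p b i) ''
      {m | ∀ i ≠ q, -1 < D i + principalDivisor p m i}) := by
  refine ⟨b q * ∑ i, D i - ∑ i, ((b i : ℝ) - b q) - ∑ i, b i * D i, ?_⟩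
  rintro _ ⟨m, hm, rfl⟩
  have hterm : ∀ i ∈ univ,
      -((b i : ℝ) - b q) ≤ (b i - b q) * (D i + principalDivisor p m i) := by
    intro i _
    rcases eq_or_ne i q with rfl | hi
    · simp
    · nlinarith [(Int.cast_le (R := ℝ)).2 (hb i hi), hm i hi]
  have hsum := sum_le_sum hterm
  simp only [sub_mul, mul_add, sum_sub_distrib, sum_add_distrib, sum_neg_distrib, ← mul_sum,
    sum_principalDivisor p hsym m] at hsum
  show _ ≤ ∑ i, (m i : ℝ) * principalDivisor p b i
  rw [sum_mul_principalDivisor_comm p hsym, sum_sub_distrib]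
  linarith

/-- `q`-reduced divisors, with `-1 < x i` standing for effectiveness: effective off `q`, and
firing any nonempty set `S` avoiding `q` would push some vertex of `S` to `-1` or below. -/
def IsReduced (q : Fin n) (x : Fin n → ℝ) : Prop :=
  (∀ i ≠ q, -1 < x i) ∧
    ∀ S ⊆ univ.erase q, S.Nonempty → ∃ i ∈ S, x i ≤ (∑ j ∈ Sᶜ, p i j) - 1

lemma exists_isReduced [NeZero n] (hsym : ∀ i j, p i j = p j i) (hnn : ∀ i j, 0 ≤ p i j)
    (hconn : ∀ i j : Fin n, Relation.ReflTransGen (fun a b => 0 < p a b) i j)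
    (q : Fin n) (D : Fin n → ℝ) : ∃ m, IsReduced p q (D + principalDivisor p m) := by
  obtain ⟨b, hb⟩ := exists_one_le_principalDivisor p hsym hnn hconn q
  have hb₀ : ∀ i ≠ q, 0 < principalDivisor p b i := fun i hi => one_pos.trans_le (hb i hi)
  set A : Set (Fin n → ℤ) := {m | ∀ i ≠ q, -1 < D i + principalDivisor p m i}
  set Φ : (Fin n → ℤ) → ℝ := fun m => ∑ i, m i * principalDivisor p b i
  have hbq : ∀ i ≠ q, b q ≤ b i := fun i hi => by
    exact_mod_cast (lt_of_laplacian_pos p (v := fun j => (b j : ℝ)) hnn hb₀ hi).le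
  have hbdd : BddBelow (Φ '' A) := bddBelow_sum_mul_principalDivisor p hsym hbq D
  obtain ⟨_, ⟨m, hmA, rfl⟩, hm⟩ := exists_lt_of_csInf_lt
    (Set.Nonempty.image Φ (exists_neg_one_lt_add_principalDivisor p hb₀ D))
    (lt_add_one (sInf (Φ '' A)))
  refine ⟨m, hmA, fun S hS hSne => ?_⟩
  by_contra! hviol
  -- firing `S` would keep `m` in `A` while lowering `Φ` by at least `1`
  set m' : Fin n → ℤ := m - fun j => if j ∈ S then 1 else 0
  have hm'A : m' ∈ A := fun i hi => by
    rw [principalDivisor_sub_indicator, Pi.sub_apply]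
    by_cases hiS : i ∈ S
    · have := hviol i hiS
      rw [laplacian_indicator_of_mem p hiS]
      simp only [Pi.add_apply] at this
      linarith
    · linarith [hmA i hi, laplacian_indicator_nonpos_of_notMem p hnn hiS]
  have hfire : 1 ≤ ∑ i ∈ S, principalDivisor p b i := by
    obtain ⟨i, hi⟩ := hSne
    calc 1 ≤ principalDivisor p b i := hb i (ne_of_mem_erase (hS hi))
      _ ≤ ∑ i ∈ S, principalDivisor p b i :=
        single_le_sum (fun j hj => (hb₀ j (ne_of_mem_erase (hS hj))).le) hi
  have hΦ : Φ m' = Φ m - ∑ i ∈ S, principalDivisor p b i := by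
    simp only [Φ, m', Pi.sub_apply, Int.cast_sub, sub_mul, sum_sub_distrib]
    simp [sum_ite_mem]
  linarith [csInf_le hbdd ⟨m', hm'A, rfl⟩]

section Orders

variable {α : Type*} [LinearOrder α]

/-- Baker–Norine's `ν_O = indeg_O - 1`, for the acyclic orientation `O` that directs every edge
towards its higher-ranked end. -/
def orderDivisor (r : Fin n → α) : Fin n → ℝ :=
  fun i => (∑ j ∈ univ.filter (fun j => r j < r i), p i j) - 1

lemma orderDivisor_add_dual {r : Fin n → α} (hr : Injective r) (i : Fin n) :
    orderDivisor p r i + orderDivisor p (toDual ∘ r) i = canon p i := by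
  have hsplit : univ.erase i =
      univ.filter (fun j => r j < r i) ∪ univ.filter (fun j => r i < r j) := by
    ext j
    simp [← hr.ne_iff]
  have hdisj : Disjoint (univ.filter fun j => r j < r i) (univ.filter fun j => r i < r j) :=
    disjoint_filter.2 fun j _ h => h.not_gt
  simp only [orderDivisor, canon, comp_apply, toDual_lt_toDual, hsplit, sum_union hdisj]
  ring

lemma sum_orderDivisor_dual (hsym : ∀ i j, p i j = p j i) (r : Fin n → α) :
    ∑ i, orderDivisor p (toDual ∘ r) i = ∑ i, orderDivisor p r i := by
  simp only [orderDivisor, comp_apply, toDual_lt_toDual, sum_sub_distrib, sum_filter]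
  rw [sum_comm]
  simp_rw [hsym]

lemma two_mul_sum_orderDivisor (hsym : ∀ i j, p i j = p j i) {r : Fin n → α}
    (hr : Injective r) : 2 * ∑ i, orderDivisor p r i = ∑ i, canon p i := by
  rw [two_mul]
  nth_rewrite 2 [← sum_orderDivisor_dual p hsym r]
  rw [← sum_add_distrib]
  exact sum_congr rfl fun i _ => orderDivisor_add_dual p hr i

lemma sum_orderDivisor (hsym : ∀ i j, p i j = p j i) {r : Fin n → α} (hr : Injective r) :
    ∑ i, orderDivisor p r i = genus p - 1 := by
  have hgenus : ∑ i, orderDivisor p (fun i : Fin n => toDual i) i = genus p - 1 := by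
    simp [orderDivisor, genus, sum_filter, Fintype.sum_prod_type, sum_sub_distrib]
  linarith [two_mul_sum_orderDivisor p hsym hr,
    two_mul_sum_orderDivisor p hsym (r := fun i : Fin n => toDual i) toDual.injective]

lemma sum_canon (hsym : ∀ i j, p i j = p j i) : ∑ i, canon p i = 2 * genus p - 2 := by
  rw [← two_mul_sum_orderDivisor p hsym injective_id, sum_orderDivisor p hsym injective_id]
  ring

lemma not_lsNonempty_orderDivisor [NeZero n] (hnn : ∀ i j, 0 ≤ p i j) (r : Fin n → α) :
    ¬ LSNonempty p (orderDivisor p r) := by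
  rw [lsNonempty_iff]
  rintro ⟨m, hm⟩
  -- the vertex of least `m` and, among those, of least `r`, loses at least what `ν_r` gives it
  obtain ⟨i, -, hi⟩ := exists_min_image univ (fun j => toLex (m j, r j)) univ_nonempty
  have hi' : ∀ j, m i ≤ m j ∧ (m i = m j → r i ≤ r j) :=
    fun j => Prod.Lex.toLex_le_toLex'.1 (hi j (mem_univ j))
  have hsub : univ.filter (fun j => r j < r i) ⊆ univ.filter (fun j => m j ≠ m i) := by
    intro j
    simp only [mem_filter, mem_univ, true_and]
    exact fun hrj hmj => (hi' j).2 hmj.symm |>.not_gt hrj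
  have hν : orderDivisor p r i ≤ (∑ j ∈ univ.filter (fun j => m j ≠ m i), p i j) - 1 :=
    sub_le_sub_right (sum_le_sum_of_subset_of_nonneg hsub fun j _ _ => hnn i j) 1
  have hL : principalDivisor p m i ≤ -∑ j ∈ univ.filter (fun j => m j ≠ m i), p i j := by
    rw [principalDivisor_apply, laplacian_apply, ← sum_filter_add_sum_filter_not univ
      (fun j => m j ≠ m i), ← sum_neg_distrib]
    refine add_le_of_le_of_nonpos (sum_le_sum fun j hj => ?_) (sum_nonpos fun j hj => ?_)
    · have hlt : (m i : ℝ) + 1 ≤ m j := by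
        exact_mod_cast (hi' j).1.lt_of_ne (mem_filter.1 hj).2.symm
      nlinarith [hnn i j]
    · simp [(of_not_not (mem_filter.1 hj).2)]
  linarith [hm i]

/-- Dhar's burning algorithm: rank the vertices of `T` in the order in which they burn. -/
lemma exists_rank_of_burning (x : Fin n → ℝ) (T : Finset (Fin n))
    (hT : ∀ S ⊆ T, S.Nonempty → ∃ i ∈ S, x i ≤ (∑ j ∈ Sᶜ, p i j) - 1) :
    ∃ r : Fin n → ℕ, Set.InjOn r T ∧ (∀ i ∈ T, ∀ j ∉ T, r j < r i) ∧
      ∀ i ∈ T, x i ≤ orderDivisor p r i := by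
  induction T using Finset.strongInduction with
  | H T ih =>
  rcases T.eq_empty_or_nonempty with rfl | hne
  · exact ⟨0, by simp, by simp, by simp⟩
  obtain ⟨i₀, hi₀, hx₀⟩ := hT T subset_rfl hne
  obtain ⟨r, hinj, hlt, hle⟩ := ih (T.erase i₀) (erase_ssubset hi₀)
    fun S hS => hT S (hS.trans (erase_subset _ _))
  have hfirst : ∀ j ∈ T, j ≠ i₀ → r i₀ < r j :=
    fun j hj hji => hlt j (mem_erase.2 ⟨hji, hj⟩) i₀ (notMem_erase i₀ T)
  -- rank `T` above its complement, keeping `r` on `T`, where `i₀` is lowest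
  set r' : Fin n → ℕ := fun j => if j ∈ T then r j + 1 else 0
  have hlt' : ∀ i ∈ T, ∀ j, r' j < r' i ↔ j ∉ T ∨ r j < r i := by
    intro i hi j
    by_cases hj : j ∈ T <;> simp [r', hi, hj]
  refine ⟨r', fun i hi j hj hij => ?_, fun i hi j hj => (hlt' i hi j).2 (Or.inl hj),
    fun i hi => ?_⟩
  · simp only [r', if_pos (mem_coe.1 hi), if_pos (mem_coe.1 hj), add_left_inj] at hij
    by_contra hne
    rcases eq_or_ne i i₀ with rfl | hii₀
    · exact (hfirst j hj (Ne.symm hne)).ne hij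
    rcases eq_or_ne j i₀ with rfl | hji₀
    · exact (hfirst i hi hii₀).ne' hij
    exact hne (hinj (mem_erase.2 ⟨hii₀, hi⟩) (mem_erase.2 ⟨hji₀, hj⟩) hij)
  · rcases eq_or_ne i i₀ with rfl | hii₀
    · have hfilter : univ.filter (fun j => r' j < r' i) = Tᶜ := by
        ext j
        simp only [mem_filter, mem_univ, true_and, hlt' i hi, mem_compl, or_iff_left_iff_imp]
        refine fun hrj hj => (hfirst j hj ?_).not_gt hrj
        rintro rfl
        exact lt_irrefl _ hrj
      rwa [orderDivisor, hfilter]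
    · have hfilter : univ.filter (fun j => r' j < r' i) = univ.filter (fun j => r j < r i) := by
        ext j
        simp only [mem_filter, mem_univ, true_and, hlt' i hi, or_iff_right_iff_imp]
        exact fun hj => hlt i (mem_erase.2 ⟨hii₀, hi⟩) j (fun h => hj (mem_of_mem_erase h))
      rw [orderDivisor, hfilter]
      exact hle i (mem_erase.2 ⟨hii₀, hi⟩)

end Orders

lemma exists_orderDivisor_ge_of_isReduced (hnn : ∀ i j, 0 ≤ p i j) {q : Fin n}
    {x : Fin n → ℝ} (hx : IsReduced p q x) (hq : x q ≤ -1) :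
    ∃ r : Fin n → ℕ, Injective r ∧ x ≤ orderDivisor p r := by
  obtain ⟨r, hinj, hlt, hle⟩ := exists_rank_of_burning p x (univ.erase q) hx.2
  have hq' : ∀ i ≠ q, r q < r i :=
    fun i hi => hlt i (mem_erase.2 ⟨hi, mem_univ i⟩) q (notMem_erase q univ)
  refine ⟨r, fun i j hij => ?_, fun i => ?_⟩
  · by_contra hne
    rcases eq_or_ne i q with rfl | hi
    · exact (hq' j (Ne.symm hne)).ne hij
    rcases eq_or_ne j q with rfl | hj
    · exact (hq' i hi).ne' hij
    exact hne (hinj (by simpa using hi) (by simpa using hj) hij)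
  · rcases eq_or_ne i q with rfl | hi
    · exact hq.trans (le_sub_iff_add_le.2 (by simpa using sum_nonneg fun j _ => hnn i j))
    · exact hle i (mem_erase.2 ⟨hi, mem_univ i⟩)

lemma h0_le {D E : Fin n → ℝ} (hE : 0 ≤ E) (hDE : ¬ LSNonempty p (D - E)) :
    h0 p D ≤ ∑ i, E i :=
  csInf_le ⟨0, by rintro _ ⟨E, hE, -, rfl⟩; exact sum_nonneg fun i _ => hE i⟩
    ⟨E, hE, hDE, rfl⟩

lemma le_h0 [NeZero n] (hsym : ∀ i j, p i j = p j i) {D : Fin n → ℝ} {c : ℝ}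
    (h : ∀ E, 0 ≤ E → ¬ LSNonempty p (D - E) → c ≤ ∑ i, E i) : c ≤ h0 p D := by
  refine le_csInf ⟨_, fun i => |D i| + 1, fun i => by positivity, ?_, rfl⟩
    fun _ ⟨E, hE, hDE, hd⟩ => hd ▸ h E hE hDE
  refine not_lsNonempty_of_sum_le p hsym ?_
  have hle := sum_le_sum fun i (_ : i ∈ univ) =>
    show D i - (|D i| + 1) ≤ -1 by linarith [le_abs_self (D i)]
  simpa using hle

lemma h0_mono [NeZero n] (hsym : ∀ i j, p i j = p j i) {D D' : Fin n → ℝ} (h : D ≤ D') :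
    h0 p D ≤ h0 p D' :=
  le_h0 p hsym fun E hE hDE =>
    h0_le p hE fun hLS => hDE (LSNonempty.mono p (sub_le_sub_right h E) hLS)

lemma h0_canon_sub_le [NeZero n] (hsym : ∀ i j, p i j = p j i) (hnn : ∀ i j, 0 ≤ p i j)
    (hconn : ∀ i j : Fin n, Relation.ReflTransGen (fun a b => 0 < p a b) i j)
    {D : Fin n → ℝ} (hD : ¬ LSNonempty p D) :
    h0 p (canon p - D) ≤ genus p - 1 - ∑ i, D i := by
  obtain ⟨m, hred⟩ := exists_isReduced p hsym hnn hconn 0 D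
  set x := D + principalDivisor p m
  have hxq : x 0 ≤ -1 := by
    by_contra! hx0
    refine hD ((lsNonempty_add_principalDivisor_iff p D m).1
      ((lsNonempty_iff p x).2 ⟨0, fun i => ?_⟩))
    simp only [map_zero, Pi.zero_apply, add_zero]
    rcases eq_or_ne i 0 with rfl | hi
    exacts [hx0, hred.1 i hi]
  obtain ⟨r, hr, hxr⟩ := exists_orderDivisor_ge_of_isReduced p hnn hred hxq
  have hKD : canon p - D - (orderDivisor p r - x) =
      orderDivisor p (toDual ∘ r) + principalDivisor p m := by
    ext i
    have := orderDivisor_add_dual p hr i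
    simp only [Pi.sub_apply, Pi.add_apply, x]
    linarith
  calc h0 p (canon p - D) ≤ ∑ i, (orderDivisor p r - x) i := by
        refine h0_le p (sub_nonneg.2 hxr) ?_
        rw [hKD, lsNonempty_add_principalDivisor_iff]
        exact not_lsNonempty_orderDivisor p hnn _
    _ = genus p - 1 - ∑ i, D i := by
        simp [x, sum_sub_distrib, sum_add_distrib, sum_orderDivisor p hsym hr,
          sum_principalDivisor p hsym]

lemma h0_canon_sub_add_le_h0 [NeZero n] (hsym : ∀ i j, p i j = p j i)
    (hnn : ∀ i j, 0 ≤ p i j)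
    (hconn : ∀ i j : Fin n, Relation.ReflTransGen (fun a b => 0 < p a b) i j)
    (D : Fin n → ℝ) : h0 p (canon p - D) + ∑ i, D i + 1 - genus p ≤ h0 p D := by
  refine le_h0 p hsym fun E hE hDE => ?_
  have hmono := h0_mono p hsym (sub_le_sub_left (sub_le_self D hE) (canon p))
  have hle := h0_canon_sub_le p hsym hnn hconn hDE
  simp only [Pi.sub_apply, sum_sub_distrib] at hle
  linarith

end RGraph

theorem stmt_18_general {n : ℕ} (hn : 0 < n) (p : Fin n → Fin n → ℝ)
    (hsym : ∀ i j, p i j = p j i) (hnn : ∀ i j, 0 ≤ p i j)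
    (hconn : ∀ i j : Fin n, Relation.ReflTransGen (fun a b => 0 < p a b) i j)
    (D : Fin n → ℝ) :
    h0 p D - h0 p (canon p - D) = (∑ i, D i) + 1 - genus p := by
  have : NeZero n := ⟨hn.ne'⟩
  have hD := RGraph.h0_canon_sub_add_le_h0 p hsym hnn hconn D
  have hKD := RGraph.h0_canon_sub_add_le_h0 p hsym hnn hconn (canon p - D)
  simp only [sub_sub_cancel, Pi.sub_apply, sum_sub_distrib] at hKD
  linarith [RGraph.sum_canon p hsym]

/-- Riemann–Roch for real divisors on connected edge-weighted graphs over ℝ: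
`h⁰(D) - h⁰(K - D) = deg(D) + 1 - g`. -/
theorem stmt_18 {n : ℕ} (hn : 0 < n) (p : Fin n → Fin n → ℝ)
    (hsym : ∀ i j, p i j = p j i) (hnn : ∀ i j, 0 ≤ p i j) (hloop : ∀ i, p i i = 0)
    (hconn : ∀ i j : Fin n, Relation.ReflTransGen (fun a b => 0 < p a b) i j)
    (D : Fin n → ℝ) :
    h0 p D - h0 p (canon p - D) = (∑ i, D i) + 1 - genus p :=
  stmt_18_general hn p hsym hnn hconn D
end
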